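/- Let K be a convex body in ℝⁿ, let x ∈ int K, y ∈ ℝⁿ \ {0}, a ∈ ℝⁿ, and suppose the ellipse with parameters (a, b) through x in direction y is inscribed in K where b = b*_K(x,y) (i.e., it is a b-maximal ellipse for (x,y)). Then no translate of this ellipse lies entirely in the interior of K: for every v ∈ ℝⁿ there exists θ ∈ ℝ such that (cos θ)·a + b(sin θ)·y + (x − a) + v ∉ int K. -/

import Mathlib

/-- A convex body in ℝⁿ: a compact convex set with nonempty interior. -/
def IsConvexBody {n : ℕ} (K : Set (EuclideanSpace ℝ (Fin n))) : Prop :=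
  IsCompact K ∧ Convex ℝ K ∧ (interior K).Nonempty

/-- The ellipse with parameters `(a, b)` through `x` in direction `y`,
`θ ↦ (cos θ)•a + b(sin θ)•y + (x - a)`, is inscribed in `K`. -/
def InscribedEllipse {n : ℕ} (K : Set (EuclideanSpace ℝ (Fin n)))
    (x y a : EuclideanSpace ℝ (Fin n)) (b : ℝ) : Prop :=
  ∀ θ : ℝ, (Real.cos θ) • a + (b * Real.sin θ) • y + (x - a) ∈ K

/-- `b*_K(x,y)`: the supremum of `b > 0` such that some ellipse with parameters
`(a,b)` through `x` in direction `y` is inscribed in `K`. -/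
noncomputable def bStar {n : ℕ} (K : Set (EuclideanSpace ℝ (Fin n)))
    (x y : EuclideanSpace ℝ (Fin n)) : ℝ :=
  sSup { b : ℝ | 0 < b ∧ ∃ a, InscribedEllipse K x y a b }

/-!
If a translate `E + v` of the maximal ellipse `E` lay in `interior K`, then by compactness so would
an `ε`-neighbourhood of it, and by convexity the segment from a point `z` of `E` to that
neighbourhood of `z + v` stays in `K`: `z` may be pushed by `t • v` plus an error of norm `< t ε`,
for any `t ∈ (0, 1]`. Moving the centre to `a - v / 2` pushes the point of angle `φ` by exactly
`t • v` with `t = (1 - cos φ) / 2`, and stretching the `y`-axis by `1 + δ` moves it off the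
ellipse by only `O(δ sin² φ) = O(δ t)`. Hence the ellipse `(a - v / 2, b (1 + δ))` is inscribed
for small `δ > 0`, contradicting the maximality of `b`.
-/

open Real Set Metric

lemma exists_cos_sin_eq {c s : ℝ} (h : c ^ 2 + s ^ 2 = 1) :
    ∃ θ : ℝ, cos θ = c ∧ sin θ = s := by
  have hnorm : ‖(⟨c, s⟩ : ℂ)‖ = 1 := by
    rw [Complex.norm_def, Complex.normSq_mk, ← sq, ← sq, h, Real.sqrt_one]
  have hz : (⟨c, s⟩ : ℂ) ≠ 0 := by
    rintro h0
    simp [h0] at hnorm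
  exact ⟨Complex.arg ⟨c, s⟩, by simp [Complex.cos_arg hz, hnorm],
    by simp [Complex.sin_arg, hnorm]⟩

lemma abs_sub_div_le_sub_one {p r : ℝ} (hp : |p| ≤ r) (hr : 1 ≤ r) : |p - p / r| ≤ r - 1 := by
  have hr0 : 0 < r := one_pos.trans_le hr
  rw [show p - p / r = p * (r - 1) / r by field_simp, abs_div, abs_mul, abs_of_pos hr0,
    abs_of_nonneg (sub_nonneg.mpr hr), div_le_iff₀ hr0]
  nlinarith [abs_nonneg p]

/-- Normalising `(cos φ, (1 + δ) sin φ)` to the unit circle moves it by `O(δ (1 - cos φ))`. -/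
lemma exists_angle_near_stretched (φ : ℝ) {δ : ℝ} (hδ₀ : 0 ≤ δ) (hδ₁ : δ ≤ 1) :
    ∃ θ : ℝ, |cos φ - cos θ| ≤ 6 * δ * (1 - cos φ) ∧
      |(1 + δ) * sin φ - sin θ| ≤ 6 * δ * (1 - cos φ) := by
  set r := √(cos φ ^ 2 + ((1 + δ) * sin φ) ^ 2)
  have hr_sq : r ^ 2 = cos φ ^ 2 + ((1 + δ) * sin φ) ^ 2 := sq_sqrt (by positivity)
  have hstretch : ((1 + δ) * sin φ) ^ 2 = sin φ ^ 2 + (2 + δ) * δ * sin φ ^ 2 := by ring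
  have hpyth := cos_sq_add_sin_sq φ
  have hr : 1 ≤ r := by
    rw [← one_le_sq_iff₀ (sqrt_nonneg _), hr_sq, hstretch]
    nlinarith [show 0 ≤ (2 + δ) * δ * sin φ ^ 2 by positivity]
  have hr0 : r ≠ 0 := by positivity
  have hcos : |cos φ| ≤ r := by
    rw [← sq_le_sq₀ (abs_nonneg _) (sqrt_nonneg _), sq_abs, hr_sq]
    nlinarith [sq_nonneg ((1 + δ) * sin φ)]
  have hsin : |(1 + δ) * sin φ| ≤ r := by
    rw [← sq_le_sq₀ (abs_nonneg _) (sqrt_nonneg _), sq_abs, hr_sq]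
    nlinarith [sq_nonneg (cos φ)]
  -- `r - 1 ≤ r² - 1 = (2δ + δ²) sin² φ` and `sin² φ = (1 - cos φ)(1 + cos φ) ≤ 2 (1 - cos φ)`
  have hr_sub : r - 1 ≤ 6 * δ * (1 - cos φ) := by
    have hsin_sq : sin φ ^ 2 ≤ 2 * (1 - cos φ) := by nlinarith [cos_le_one φ, neg_one_le_cos φ]
    nlinarith [mul_le_mul_of_nonneg_left hsin_sq (by positivity : 0 ≤ (2 + δ) * δ),
      mul_nonneg hδ₀ (sq_nonneg (sin φ))]
  obtain ⟨θ, hθc, hθs⟩ : ∃ θ : ℝ, cos θ = cos φ / r ∧ sin θ = (1 + δ) * sin φ / r := by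
    refine exists_cos_sin_eq ?_
    rw [div_pow, div_pow, ← add_div, ← hr_sq, div_self (pow_ne_zero 2 hr0)]
  refine ⟨θ, ?_⟩
  rw [hθc, hθs]
  exact ⟨(abs_sub_div_le_sub_one hcos hr).trans hr_sub,
    (abs_sub_div_le_sub_one hsin hr).trans hr_sub⟩

section Ellipse

variable {n : ℕ} {K : Set (EuclideanSpace ℝ (Fin n))} {x y a : EuclideanSpace ℝ (Fin n)} {b : ℝ}

lemma bddAbove_setOf_inscribedEllipse (hK : Bornology.IsBounded K) (x : EuclideanSpace ℝ (Fin n))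
    (hy : y ≠ 0) : BddAbove {b : ℝ | 0 < b ∧ ∃ a, InscribedEllipse K x y a b} := by
  refine ⟨diam K / (2 * ‖y‖), ?_⟩
  rintro b ⟨hb, a, hins⟩
  have hdist := dist_le_diam_of_mem hK (hins (π / 2)) (hins (-(π / 2)))
  rw [cos_neg, sin_neg, cos_pi_div_two, sin_pi_div_two, dist_eq_norm,
    show (0 : ℝ) • a + (b * 1) • y + (x - a) - ((0 : ℝ) • a + (b * -1) • y + (x - a))
      = (2 * b) • y by module, norm_smul, Real.norm_of_nonneg (by positivity)] at hdist
  rw [le_div_iff₀ (by positivity)]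
  linarith

/-- For small `b`, the degenerate ellipse with `a = 0` is a segment through `x` inside `K`. -/
lemma bStar_pos (hK : Bornology.IsBounded K) (hx : x ∈ interior K) (hy : y ≠ 0) :
    0 < bStar K x y := by
  obtain ⟨r, hr, hball⟩ := Metric.isOpen_iff.mp isOpen_interior x hx
  have hb : 0 < r / (2 * ‖y‖) := by positivity
  refine hb.trans_le (le_csSup (bddAbove_setOf_inscribedEllipse hK x hy) ⟨hb, 0, fun θ => ?_⟩)
  refine interior_subset (hball ?_)
  have hy' := norm_pos_iff.mpr hy
  rw [mem_ball, dist_eq_norm, smul_zero, zero_add, sub_zero, add_sub_cancel_right, norm_smul,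
    Real.norm_eq_abs, abs_mul, abs_of_pos hb]
  field_simp
  nlinarith [abs_sin_le_one θ]

lemma exists_pos_translate_add_mem_interior {v : EuclideanSpace ℝ (Fin n)}
    (hv : ∀ θ, cos θ • a + (b * sin θ) • y + (x - a) + v ∈ interior K) :
    ∃ ε > 0, ∀ θ (w : EuclideanSpace ℝ (Fin n)), ‖w‖ < ε →
      cos θ • a + (b * sin θ) • y + (x - a) + (v + w) ∈ interior K := by
  set P : ℝ → EuclideanSpace ℝ (Fin n) := fun θ => cos θ • a + (b * sin θ) • y + (x - a) + v
  have hP : IsCompact (range P) :=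
    Function.Periodic.compact_of_continuous (c := 2 * π)
      (fun θ => by simp [P, cos_add_two_pi, sin_add_two_pi]) two_pi_pos.ne' (by fun_prop)
  obtain ⟨ε, hε, hthick⟩ :=
    hP.exists_thickening_subset_open isOpen_interior (range_subset_iff.mpr hv)
  refine ⟨ε, hε, fun θ w hw => hthick (mem_thickening_iff.mpr ⟨P θ, mem_range_self θ, ?_⟩)⟩
  rwa [dist_eq_norm, ← add_assoc, add_sub_cancel_left]

lemma InscribedEllipse.exists_stretch_of_translate_mem_interior (hK : Convex ℝ K)
    (hins : InscribedEllipse K x y a b) {v : EuclideanSpace ℝ (Fin n)}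
    (hv : ∀ θ, cos θ • a + (b * sin θ) • y + (x - a) + v ∈ interior K) :
    ∃ δ > 0, InscribedEllipse K x y (a - (2 : ℝ)⁻¹ • v) (b * (1 + δ)) := by
  obtain ⟨ε, hε, hnear⟩ := exists_pos_translate_add_mem_interior hv
  set C := ‖a‖ + |b| * ‖y‖
  set δ := min 1 (ε / (12 * (C + 1)))
  have hδ : 0 < δ := lt_min one_pos (by positivity)
  have hδC : 12 * δ * C < ε := by
    have := min_le_right 1 (ε / (12 * (C + 1)))
    rw [le_div_iff₀ (by positivity)] at this
    nlinarith
  refine ⟨δ, hδ, fun φ => ?_⟩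
  obtain ⟨θ, hc, hs⟩ := exists_angle_near_stretched φ hδ.le (min_le_left _ _)
  set t := (1 - cos φ) / 2
  set e := (cos φ - cos θ) • a + (b * ((1 + δ) * sin φ - sin θ)) • y
  have he : ‖e‖ ≤ t * (12 * δ * C) := by
    refine (norm_add_le _ _).trans ?_
    rw [norm_smul, norm_smul, Real.norm_eq_abs, Real.norm_eq_abs, abs_mul]
    have ha_term := mul_le_mul_of_nonneg_right hc (norm_nonneg a)
    have hy_term := mul_le_mul_of_nonneg_right (mul_le_mul_of_nonneg_left hs (abs_nonneg b))
      (norm_nonneg y)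
    calc _ ≤ 6 * δ * (1 - cos φ) * ‖a‖ + |b| * (6 * δ * (1 - cos φ)) * ‖y‖ := by linarith
      _ = t * (12 * δ * C) := by simp only [t, C]; ring
  have hpoint : cos φ • (a - (2 : ℝ)⁻¹ • v) + (b * (1 + δ) * sin φ) • y + (x - (a - (2 : ℝ)⁻¹ • v))
      = cos θ • a + (b * sin θ) • y + (x - a) + (t • v + e) := by
    simp only [t, e]
    module
  rw [hpoint]
  rcases (show 0 ≤ t by simp only [t]; linarith [cos_le_one φ]).eq_or_lt with ht | ht
  · have he₀ : e = 0 := norm_le_zero_iff.mp (by simpa [← ht] using he)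
    rw [← ht, he₀, zero_smul, add_zero, add_zero]
    exact hins θ
  · have hw : cos θ • a + (b * sin θ) • y + (x - a) + (v + t⁻¹ • e) ∈ interior K := by
      refine hnear θ _ ?_
      rw [norm_smul, norm_inv, Real.norm_of_nonneg ht.le, inv_mul_lt_iff₀ ht]
      nlinarith
    have ht₁ : t ≤ 1 := by simp only [t]; linarith [neg_one_le_cos φ]
    have := hK.add_smul_mem_interior (hins θ) hw ⟨ht, ht₁⟩
    rw [smul_add, smul_inv_smul₀ ht.ne'] at this
    exact interior_subset this

end Ellipse

theorem stmt_0 {n : ℕ} (K : Set (EuclideanSpace ℝ (Fin n)))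
    (hK : IsConvexBody K) (x y a : EuclideanSpace ℝ (Fin n))
    (hx : x ∈ interior K) (hy : y ≠ 0)
    (hins : InscribedEllipse K x y a (bStar K x y)) :
    ∀ v : EuclideanSpace ℝ (Fin n), ∃ θ : ℝ,
      (Real.cos θ) • a + (bStar K x y * Real.sin θ) • y + (x - a) + v ∉ interior K := by
  intro v
  by_contra! hv
  obtain ⟨hcompact, hconvex, -⟩ := hK
  have hb := bStar_pos hcompact.isBounded hx hy
  obtain ⟨δ, hδ, hstretch⟩ := hins.exists_stretch_of_translate_mem_interior hconvex hv
  have hle : bStar K x y * (1 + δ) ≤ bStar K x y :=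
    le_csSup (bddAbove_setOf_inscribedEllipse hcompact.isBounded x hy)
      ⟨by positivity, _, hstretch⟩
  nlinarith
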